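/- Let A and B be finite-dimensional complex superalgebras, U a simple graded A-module and W a simple graded B-module, with at least one of U, W of type M. Then U ⊗ W is a simple module over the graded tensor product A ⊗̇ B; it is of type M if both U and W are of type M, and of type Q if exactly one of them is of type Q. -/

import Mathlib

noncomputable section
open scoped TensorProduct
open TensorProduct in
/-- The linear map `A ⊗ B → C`, `a ⊗ b ↦ iA a * iB b`. -/
def muMap {A B C : Type} [Ring A] [Algebra ℂ A] [Ring B] [Algebra ℂ B]
    [Ring C] [Algebra ℂ C] (iA : A →ₐ[ℂ] C) (iB : B →ₐ[ℂ] C) :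
    TensorProduct ℂ A B →ₗ[ℂ] C :=
  TensorProduct.lift (LinearMap.mk₂ ℂ (fun a b => iA a * iB b)
    (fun a a' b => by simp [map_add, add_mul])
    (fun c a b => by simp [map_smul, smul_mul_assoc])
    (fun a b b' => by simp [map_add, mul_add])
    (fun c a b => by simp [map_smul, mul_smul_comm]))

/-- `(C, σC)` together with `iA : A → C`, `iB : B → C` is the `ℤ/2`-graded
(super) tensor product of the superalgebras `(A, σA)` and `(B, σB)`; here a
superalgebra is encoded by its grading involution `σ` (`σ = 1` on the even part
and `σ = -1` on the odd part).  The third condition encodes the sign rule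
`(1 ⊗ b)(a ⊗ 1) = (-1)^{deg a · deg b} (a ⊗ b)` for homogeneous `a`, `b`, and the
last condition says that `a ⊗ b ↦ iA a * iB b` is a linear isomorphism
`A ⊗ B ≅ C`. -/
def IsGradedTensor {A B C : Type} [Ring A] [Algebra ℂ A] [Ring B] [Algebra ℂ B]
    [Ring C] [Algebra ℂ C] (σA : A ≃ₐ[ℂ] A) (σB : B ≃ₐ[ℂ] B) (σC : C ≃ₐ[ℂ] C)
    (iA : A →ₐ[ℂ] C) (iB : B →ₐ[ℂ] C) : Prop :=
  (∀ a, σA (σA a) = a) ∧ (∀ b, σB (σB b) = b) ∧ (∀ c, σC (σC c) = c) ∧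
  (∀ a, σC (iA a) = iA (σA a)) ∧ (∀ b, σC (iB b) = iB (σB b)) ∧
  (∀ a b, iB b * iA a =
      (2⁻¹ : ℂ) • (iA (a + σA a) * iB b) + (2⁻¹ : ℂ) • (iA (a - σA a) * iB (σB b))) ∧
  Function.Bijective (muMap iA iB)
section SuperFramework

variable {A M N : Type} [Ring A] [Algebra ℂ A]
  [AddCommGroup M] [Module ℂ M] [AddCommGroup N] [Module ℂ N]

/-- `f` is an even homomorphism of graded modules (given by representations
`ρ` and grading involutions `J`). -/
def IsEvenHom (ρM : A →ₐ[ℂ] Module.End ℂ M) (JM : M →ₗ[ℂ] M)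
    (ρN : A →ₐ[ℂ] Module.End ℂ N) (JN : N →ₗ[ℂ] N) (f : M →ₗ[ℂ] N) : Prop :=
  (∀ m, f (JM m) = JN (f m)) ∧ ∀ a m, f (ρM a m) = ρN a (f m)

/-- `f` is an odd homomorphism of graded modules: it switches the grading and
satisfies `f(a·v) = (-1)^{deg a} a·f(v)` on homogeneous `a` (encoded via the
grading involution `σ` of the superalgebra `A`). -/
def IsOddHom (σ : A ≃ₐ[ℂ] A) (ρM : A →ₐ[ℂ] Module.End ℂ M) (JM : M →ₗ[ℂ] M)
    (ρN : A →ₐ[ℂ] Module.End ℂ N) (JN : N →ₗ[ℂ] N) (f : M →ₗ[ℂ] N) : Prop :=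
  (∀ m, f (JM m) = - JN (f m)) ∧ ∀ a m, f (ρM a m) = ρN (σ a) (f m)

/-- `(ρ, J)` is a `ℤ/2`-graded representation of the superalgebra `(A, σ)`:
`J` is the grading involution of the module. -/
def IsSuperRep (σ : A ≃ₐ[ℂ] A) (ρ : A →ₐ[ℂ] Module.End ℂ M) (J : M →ₗ[ℂ] M) : Prop :=
  (∀ m, J (J m) = m) ∧ ∀ a m, J (ρ a m) = ρ (σ a) (J m)

/-- A graded representation is simple if it is nonzero and has no nontrivial
graded (i.e. `J`-stable and `A`-stable) subspaces. -/
def IsSimpleRep (ρ : A →ₐ[ℂ] Module.End ℂ M) (J : M →ₗ[ℂ] M) : Prop :=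
  (∃ m : M, m ≠ 0) ∧
  ∀ p : Submodule ℂ M, (∀ m ∈ p, J m ∈ p) → (∀ a, ∀ m ∈ p, ρ a m ∈ p) →
    p = ⊥ ∨ p = ⊤

/-- A graded module is of type `M` if its graded endomorphism superalgebra is `ℂ`:
even endomorphisms are scalar and odd endomorphisms vanish. -/
def TypeMRep (σ : A ≃ₐ[ℂ] A) (ρ : A →ₐ[ℂ] Module.End ℂ M) (J : M →ₗ[ℂ] M) : Prop :=
  (∀ f : M →ₗ[ℂ] M, IsEvenHom ρ J ρ J f → ∃ c : ℂ, f = c • LinearMap.id) ∧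
  (∀ f : M →ₗ[ℂ] M, IsOddHom σ ρ J ρ J f → f = 0)

/-- A graded module is of type `Q` if its graded endomorphism superalgebra is the
2-dimensional Clifford algebra `C₁`: even endomorphisms are scalar and the odd
endomorphisms form a line spanned by an odd square root of the identity. -/
def TypeQRep (σ : A ≃ₐ[ℂ] A) (ρ : A →ₐ[ℂ] Module.End ℂ M) (J : M →ₗ[ℂ] M) : Prop :=
  (∀ f : M →ₗ[ℂ] M, IsEvenHom ρ J ρ J f → ∃ c : ℂ, f = c • LinearMap.id) ∧
  ∃ f : M →ₗ[ℂ] M, IsOddHom σ ρ J ρ J f ∧ f ∘ₗ f = LinearMap.id ∧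
    ∀ g : M →ₗ[ℂ] M, IsOddHom σ ρ J ρ J g → ∃ c : ℂ, g = c • f

end SuperFramework

/-- A bundled `ℤ/2`-graded module over the superalgebra `(A, σ)`. -/
structure SRep (A : Type) [Ring A] [Algebra ℂ A] (σ : A ≃ₐ[ℂ] A) where
  M : Type
  [acg : AddCommGroup M]
  [mod : Module ℂ M]
  ρ : A →ₐ[ℂ] Module.End ℂ M
  J : M →ₗ[ℂ] M
  hJ : ∀ m, J (J m) = m
  hJρ : ∀ a m, J (ρ a m) = ρ (σ a) (J m)

attribute [instance] SRep.acg SRep.mod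

/-- Isomorphism of graded modules: an invertible even or odd homomorphism
(identifying a module with its grading shift). -/
def SRepIso {A : Type} [Ring A] [Algebra ℂ A] (σ : A ≃ₐ[ℂ] A)
    (V W : SRep A σ) : Prop :=
  ∃ e : V.M ≃ₗ[ℂ] W.M,
    IsEvenHom V.ρ V.J W.ρ W.J (e : V.M →ₗ[ℂ] W.M) ∨
    IsOddHom σ V.ρ V.J W.ρ W.J (e : V.M →ₗ[ℂ] W.M)

namespace Stmt8Aux
open TensorProduct

variable {U W : Type} [AddCommGroup U] [Module ℂ U] [AddCommGroup W] [Module ℂ W]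

theorem exists_dual {u : U} (hu : u ≠ 0) : ∃ φ : U →ₗ[ℂ] ℂ, φ u = 1 := by
  have h := (Module.forall_dual_apply_eq_zero_iff ℂ u).not.mpr hu
  push_neg at h
  obtain ⟨φ, hφ⟩ := h
  exact ⟨(φ u)⁻¹ • φ, by simp [inv_mul_cancel₀ hφ]⟩

theorem tmul_left_cancel {u : U} (hu : u ≠ 0) {x y : W} (h : u ⊗ₜ[ℂ] x = u ⊗ₜ[ℂ] y) : x = y := by
  obtain ⟨φ, hφ⟩ := exists_dual hu
  have := congrArg (fun t => TensorProduct.lid ℂ W (map φ (LinearMap.id (R := ℂ) (M := W)) t)) h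
  simpa [hφ] using this

theorem tmul_right_cancel {w : W} (hw : w ≠ 0) {x y : U} (h : x ⊗ₜ[ℂ] w = y ⊗ₜ[ℂ] w) : x = y := by
  obtain ⟨φ, hφ⟩ := exists_dual hw
  have := congrArg (fun t => TensorProduct.rid ℂ U (map (LinearMap.id (R := ℂ) (M := U)) φ t)) h
  simpa [hφ] using this

theorem tmul_ne_zero {u : U} {w : W} (hu : u ≠ 0) (hw : w ≠ 0) : u ⊗ₜ[ℂ] w ≠ 0 := by
  intro h
  exact hw (tmul_left_cancel hu (by simpa using h))

variable {ι : Type} [Fintype ι] [DecidableEq ι]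

/-- left coordinate map of a tensor w.r.t. a basis of the left factor -/
def lcoord (b : Module.Basis ι ℂ U) (i : ι) : U ⊗[ℂ] W →ₗ[ℂ] W :=
  TensorProduct.lid ℂ W ∘ₗ map (b.coord i) LinearMap.id

omit [Fintype ι] [DecidableEq ι] in
@[simp] theorem lcoord_tmul (b : Module.Basis ι ℂ U) (i : ι) (u : U) (w : W) :
    lcoord b i (u ⊗ₜ w) = b.repr u i • w := by
  simp [lcoord, Module.Basis.coord_apply]

omit [DecidableEq ι] in
theorem sum_lcoord (b : Module.Basis ι ℂ U) (t : U ⊗[ℂ] W) :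
    ∑ i, b i ⊗ₜ[ℂ] lcoord b i t = t := by
  have h : ((∑ i, (TensorProduct.mk ℂ U W (b i)) ∘ₗ lcoord (W := W) b i) :
      U ⊗[ℂ] W →ₗ[ℂ] U ⊗[ℂ] W) = LinearMap.id := by
    apply TensorProduct.ext'
    intro u w
    simp only [LinearMap.coe_sum, LinearMap.coe_comp, Function.comp_apply, Finset.sum_apply,
      lcoord_tmul, LinearMap.id_apply, mk_apply]
    calc ∑ i, b i ⊗ₜ[ℂ] (b.repr u i • w) = (∑ i, b.repr u i • b i) ⊗ₜ[ℂ] w := by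
          rw [TensorProduct.sum_tmul]
          congr 1
          ext i
          rw [tmul_smul, smul_tmul']
      _ = u ⊗ₜ[ℂ] w := by rw [b.sum_repr u]
  have := congrFun (congrArg (fun (f : U ⊗[ℂ] W →ₗ[ℂ] U ⊗[ℂ] W) => (f : U ⊗[ℂ] W → U ⊗[ℂ] W)) h) t
  simpa using this

def rcoord (b : Module.Basis ι ℂ W) (i : ι) : U ⊗[ℂ] W →ₗ[ℂ] U :=
  TensorProduct.rid ℂ U ∘ₗ map LinearMap.id (b.coord i)

omit [Fintype ι] [DecidableEq ι] in
@[simp] theorem rcoord_tmul (b : Module.Basis ι ℂ W) (i : ι) (u : U) (w : W) :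
    rcoord b i (u ⊗ₜ w) = b.repr w i • u := by
  simp [rcoord, Module.Basis.coord_apply]

omit [DecidableEq ι] in
theorem sum_rcoord (b : Module.Basis ι ℂ W) (t : U ⊗[ℂ] W) :
    ∑ i, rcoord b i t ⊗ₜ[ℂ] b i = t := by
  have h : ((∑ i, ((TensorProduct.mk ℂ U W).flip (b i)) ∘ₗ rcoord (U := U) b i) :
      U ⊗[ℂ] W →ₗ[ℂ] U ⊗[ℂ] W) = LinearMap.id := by
    apply TensorProduct.ext'
    intro u w
    simp only [LinearMap.coe_sum, LinearMap.coe_comp, Function.comp_apply, Finset.sum_apply,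
      rcoord_tmul, LinearMap.id_apply, LinearMap.flip_apply, mk_apply]
    calc ∑ i, (b.repr w i • u) ⊗ₜ[ℂ] b i = u ⊗ₜ[ℂ] (∑ i, b.repr w i • b i) := by
          rw [TensorProduct.tmul_sum]
          congr 1
          ext i
          rw [smul_tmul]
      _ = u ⊗ₜ[ℂ] w := by rw [b.sum_repr w]
  have := congrFun (congrArg (fun (f : U ⊗[ℂ] W →ₗ[ℂ] U ⊗[ℂ] W) => (f : U ⊗[ℂ] W → U ⊗[ℂ] W)) h) t
  simpa using this


omit [Fintype ι] [DecidableEq ι] in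
theorem map_id_left_cancel (hU : ∃ u : U, u ≠ 0) {g g' : W →ₗ[ℂ] W}
    (h : map (LinearMap.id (R := ℂ) (M := U)) g = map LinearMap.id g') : g = g' := by
  obtain ⟨u, hu⟩ := hU
  ext w
  have := congrArg (fun f : U ⊗[ℂ] W →ₗ[ℂ] U ⊗[ℂ] W => f (u ⊗ₜ w)) h
  simp only [map_tmul, LinearMap.id_apply] at this
  exact tmul_left_cancel hu this

omit [Fintype ι] [DecidableEq ι] in
theorem map_id_right_cancel (hW : ∃ w : W, w ≠ 0) {g g' : U →ₗ[ℂ] U}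
    (h : map g (LinearMap.id (R := ℂ) (M := W)) = map g' LinearMap.id) : g = g' := by
  obtain ⟨w, hw⟩ := hW
  ext u
  have := congrArg (fun f : U ⊗[ℂ] W →ₗ[ℂ] U ⊗[ℂ] W => f (u ⊗ₜ w)) h
  simp only [map_tmul, LinearMap.id_apply] at this
  exact tmul_right_cancel hw this

/-- a linear endomorphism of `U ⊗ W` commuting with all `E ⊗ 1` is of the form `1 ⊗ g`. -/
theorem flip_left [FiniteDimensional ℂ U] (hU : ∃ u : U, u ≠ 0)
    (f : U ⊗[ℂ] W →ₗ[ℂ] U ⊗[ℂ] W)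
    (hf : ∀ E : Module.End ℂ U, f ∘ₗ map E LinearMap.id = map E LinearMap.id ∘ₗ f) :
    ∃ g : W →ₗ[ℂ] W, f = map LinearMap.id g := by
  classical
  obtain ⟨u₀, hu₀⟩ := hU
  let b := Module.finBasis ℂ U
  have hne : Nonempty (Fin (Module.finrank ℂ U)) := by
    rcases Nat.eq_zero_or_pos (Module.finrank ℂ U) with h | h
    · have := Module.finrank_zero_iff.mp h
      exact absurd (Subsingleton.elim u₀ 0) hu₀
    · exact ⟨⟨0, h⟩⟩
  obtain ⟨i₀⟩ := hne
  refine ⟨lcoord b i₀ ∘ₗ f ∘ₗ (TensorProduct.mk ℂ U W (b i₀)), TensorProduct.ext' fun u w => ?_⟩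
  set g := lcoord b i₀ ∘ₗ f ∘ₗ (TensorProduct.mk ℂ U W (b i₀))
  let E : Module.End ℂ U := (b.coord i₀).smulRight u
  have h1 : E (b i₀) = u := by simp [E, Module.Basis.coord_apply, Module.Basis.repr_self]
  have h2 : f (u ⊗ₜ w) = map E LinearMap.id (f (b i₀ ⊗ₜ w)) := by
    have := congrArg (fun F : U ⊗[ℂ] W →ₗ[ℂ] U ⊗[ℂ] W => F (b i₀ ⊗ₜ w)) (hf E)
    simp only [LinearMap.comp_apply, map_tmul, LinearMap.id_apply, h1] at this
    exact this
  rw [h2, ← sum_lcoord b (f (b i₀ ⊗ₜ w)), map_sum]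
  simp only [map_tmul, LinearMap.id_apply]
  have hE : ∀ i, E (b i) = if i = i₀ then u else 0 := by
    intro i
    simp [E, Module.Basis.coord_apply, Module.Basis.repr_self, Finsupp.single_apply]
  rw [Finset.sum_eq_single i₀]
  · simp [hE, g, LinearMap.comp_apply, mk_apply]
  · intro i _ hi
    rw [hE i, if_neg hi, zero_tmul]
  · intro h; exact absurd (Finset.mem_univ i₀) h

/-- a linear endomorphism of `U ⊗ W` commuting with all `1 ⊗ E` is of the form `g ⊗ 1`. -/
theorem flip_right [FiniteDimensional ℂ W] (hW : ∃ w : W, w ≠ 0)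
    (f : U ⊗[ℂ] W →ₗ[ℂ] U ⊗[ℂ] W)
    (hf : ∀ E : Module.End ℂ W, f ∘ₗ map LinearMap.id E = map LinearMap.id E ∘ₗ f) :
    ∃ g : U →ₗ[ℂ] U, f = map g LinearMap.id := by
  classical
  obtain ⟨w₀, hw₀⟩ := hW
  let b := Module.finBasis ℂ W
  have hne : Nonempty (Fin (Module.finrank ℂ W)) := by
    rcases Nat.eq_zero_or_pos (Module.finrank ℂ W) with h | h
    · have := Module.finrank_zero_iff.mp h
      exact absurd (Subsingleton.elim w₀ 0) hw₀
    · exact ⟨⟨0, h⟩⟩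
  obtain ⟨i₀⟩ := hne
  refine ⟨rcoord b i₀ ∘ₗ f ∘ₗ (TensorProduct.mk ℂ U W).flip (b i₀), TensorProduct.ext' fun u w => ?_⟩
  set g := rcoord b i₀ ∘ₗ f ∘ₗ (TensorProduct.mk ℂ U W).flip (b i₀)
  let E : Module.End ℂ W := (b.coord i₀).smulRight w
  have h1 : E (b i₀) = w := by simp [E, Module.Basis.coord_apply, Module.Basis.repr_self]
  have h2 : f (u ⊗ₜ w) = map LinearMap.id E (f (u ⊗ₜ b i₀)) := by
    have := congrArg (fun F : U ⊗[ℂ] W →ₗ[ℂ] U ⊗[ℂ] W => F (u ⊗ₜ b i₀)) (hf E)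
    simp only [LinearMap.comp_apply, map_tmul, LinearMap.id_apply, h1] at this
    exact this
  rw [h2, ← sum_rcoord b (f (u ⊗ₜ b i₀)), map_sum]
  simp only [map_tmul, LinearMap.id_apply]
  have hE : ∀ i, E (b i) = if i = i₀ then w else 0 := by
    intro i
    simp [E, Module.Basis.coord_apply, Module.Basis.repr_self, Finsupp.single_apply]
  rw [Finset.sum_eq_single i₀]
  · simp [hE, g, LinearMap.comp_apply, mk_apply]
  · intro i _ hi
    rw [hE i, if_neg hi, tmul_zero]
  · intro h; exact absurd (Finset.mem_univ i₀) h


theorem map_smulRight_lcoord [Fintype ι] [DecidableEq ι] (b : Module.Basis ι ℂ U) (i₁ : ι) (u : U)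
    (t : U ⊗[ℂ] W) :
    map ((b.coord i₁).smulRight u) LinearMap.id t = u ⊗ₜ[ℂ] lcoord b i₁ t := by
  conv_lhs => rw [← sum_lcoord b t]
  rw [map_sum]
  rw [Finset.sum_eq_single i₁]
  · simp [Module.Basis.coord_apply, Module.Basis.repr_self]
  · intro i _ hi
    simp [Module.Basis.coord_apply, Module.Basis.repr_self, Finsupp.single_apply, hi]
  · intro h; exact absurd (Finset.mem_univ i₁) h

theorem map_smulRight_rcoord [Fintype ι] [DecidableEq ι] (b : Module.Basis ι ℂ W) (i₁ : ι) (w : W)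
    (t : U ⊗[ℂ] W) :
    map LinearMap.id ((b.coord i₁).smulRight w) t = rcoord b i₁ t ⊗ₜ[ℂ] w := by
  conv_lhs => rw [← sum_rcoord b t]
  rw [map_sum]
  rw [Finset.sum_eq_single i₁]
  · simp [Module.Basis.coord_apply, Module.Basis.repr_self]
  · intro i _ hi
    simp [Module.Basis.coord_apply, Module.Basis.repr_self, Finsupp.single_apply, hi]
  · intro h; exact absurd (Finset.mem_univ i₁) h

omit [Fintype ι] [DecidableEq ι] in
theorem mapJ_cancel_left (hU : ∃ u : U, u ≠ 0) {J : U →ₗ[ℂ] U}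
    (hJ2 : J ∘ₗ J = LinearMap.id) {x y : W →ₗ[ℂ] W}
    (h : map J x = map J y) : x = y := by
  have h2 : map J x ∘ₗ map J LinearMap.id = map J y ∘ₗ map J LinearMap.id := by rw [h]
  rw [← map_comp, ← map_comp, hJ2, LinearMap.comp_id, LinearMap.comp_id] at h2
  exact map_id_left_cancel hU h2

omit [Fintype ι] [DecidableEq ι] in
theorem mapJ_cancel_right (hW : ∃ w : W, w ≠ 0) {J : W →ₗ[ℂ] W}
    (hJ2 : J ∘ₗ J = LinearMap.id) {x y : U →ₗ[ℂ] U}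
    (h : map x J = map y J) : x = y := by
  have h2 : map x J ∘ₗ map LinearMap.id J = map y J ∘ₗ map LinearMap.id J := by rw [h]
  rw [← map_comp, ← map_comp, hJ2, LinearMap.comp_id, LinearMap.comp_id] at h2
  exact map_id_right_cancel hW h2

omit [Fintype ι] [DecidableEq ι] in
theorem comp_map_left (f₂ f₁ : U →ₗ[ℂ] U) :
    (map f₂ (LinearMap.id (R := ℂ) (M := W))) ∘ₗ (map f₁ LinearMap.id)
      = map (f₂ ∘ₗ f₁) LinearMap.id := by
  rw [← map_comp, LinearMap.id_comp]

omit [Fintype ι] [DecidableEq ι] in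
theorem comp_map_right (g₂ g₁ : W →ₗ[ℂ] W) :
    (map (LinearMap.id (R := ℂ) (M := U)) g₂) ∘ₗ (map LinearMap.id g₁)
      = map LinearMap.id (g₂ ∘ₗ g₁) := by
  rw [← map_comp, LinearMap.id_comp]

omit [Fintype ι] [DecidableEq ι] in
theorem comp_map_mixed₁ (f : U →ₗ[ℂ] U) (g : W →ₗ[ℂ] W) :
    (map f (LinearMap.id (R := ℂ) (M := W))) ∘ₗ (map LinearMap.id g) = map f g := by
  rw [← map_comp, LinearMap.comp_id, LinearMap.id_comp]

omit [Fintype ι] [DecidableEq ι] in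
theorem comp_map_mixed₂ (f : U →ₗ[ℂ] U) (g : W →ₗ[ℂ] W) :
    (map (LinearMap.id (R := ℂ) (M := U)) g) ∘ₗ (map f LinearMap.id) = map f g := by
  rw [← map_comp, LinearMap.comp_id, LinearMap.id_comp]

omit [Fintype ι] [DecidableEq ι] in
theorem map_neg_left (f : U →ₗ[ℂ] U) (g : W →ₗ[ℂ] W) : map (-f) g = -(map f g) := by
  rw [show -f = (-1 : ℂ) • f by simp, TensorProduct.map_smul_left]
  exact neg_one_smul ℂ (map f g)

omit [Fintype ι] [DecidableEq ι] in
theorem map_neg_right (f : U →ₗ[ℂ] U) (g : W →ₗ[ℂ] W) : map f (-g) = -(map f g) := by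
  rw [show -g = (-1 : ℂ) • g by simp, TensorProduct.map_smul_right]
  exact neg_one_smul ℂ (map f g)

section Burnside

variable {A M : Type} [Ring A] [Algebra ℂ A] [AddCommGroup M] [Module ℂ M]

/-- Burnside's theorem: a finite-dimensional representation with no invariant
subspaces and scalar commutant is surjective onto `End`. -/
theorem burnside [FiniteDimensional ℂ M] (ρ : A →ₐ[ℂ] Module.End ℂ M)
    (hne : ∃ m : M, m ≠ 0)
    (hsimp : ∀ p : Submodule ℂ M, (∀ a, ∀ m ∈ p, ρ a m ∈ p) → p = ⊥ ∨ p = ⊤)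
    (hend : ∀ f : Module.End ℂ M, (∀ a, f ∘ₗ ρ a = ρ a ∘ₗ f) → ∃ c : ℂ, f = c • LinearMap.id) :
    Function.Surjective ρ := by
  classical
  letI instAM : Module A M := Module.compHom M ρ.toRingHom
  have hsmul : ∀ (a : A) (m : M), a • m = ρ a m := fun a m => rfl
  have halg : ∀ (c : ℂ) (m : M), (algebraMap ℂ A c) • m = c • m := by
    intro c m
    rw [hsmul, AlgHom.commutes, Module.algebraMap_end_apply]
  obtain ⟨m₀, hm₀⟩ := hne
  haveI : Nontrivial M := ⟨m₀, 0, hm₀⟩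
  haveI : IsSimpleModule A M := by
    refine { eq_bot_or_eq_top := ?_ }
    intro q
    let p : Submodule ℂ M :=
      { carrier := q.carrier
        add_mem' := fun h1 h2 => q.add_mem h1 h2
        zero_mem' := q.zero_mem
        smul_mem' := fun c m hm => by
          have : (algebraMap ℂ A c) • m ∈ q := q.smul_mem _ hm
          rwa [halg] at this }
    have hmem : ∀ m : M, m ∈ p ↔ m ∈ q := fun m => Iff.rfl
    rcases hsimp p (fun a m hm => by
      have : a • m ∈ q := q.smul_mem a ((hmem m).mp hm)
      rwa [hsmul] at this) with h | h
    · left; ext m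
      rw [← hmem m, h]; simp [Submodule.mem_bot]
    · right; ext m
      rw [← hmem m, h]; simp
  haveI : IsSemisimpleModule A M := inferInstance
  set n := Module.finrank ℂ M with hn
  let b := Module.finBasis ℂ M
  haveI : IsSemisimpleModule A (Fin n → M) := by
    refine isSemisimpleModule_of_isSemisimpleModule_submodule'
      (p := fun i : Fin n => LinearMap.range (LinearMap.single A (fun _ : Fin n => M) i))
      (fun i => IsSemisimpleModule.range _) (LinearMap.iSup_range_single A _)
  let x : Fin n → M := fun i => b i
  set N : Submodule A (Fin n → M) := Submodule.span A {x} with hN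
  obtain ⟨N', hc⟩ := exists_isCompl N
  let π := N.projectionOnto N' hc
  let e : (Fin n → M) →ₗ[A] (Fin n → M) := N.subtype ∘ₗ π
  let D : (Fin n → M) →ₗ[A] (Fin n → M) := LinearMap.id - e
  have hDx : D x = 0 := by
    have hx : x ∈ N := Submodule.mem_span_singleton_self x
    have : e x = x := by
      simp only [e, LinearMap.comp_apply]
      rw [Submodule.projectionOnto_apply_of_mem_left hc hx]
      rfl
    simp [D, this]
  -- the matrix entries of D
  let g : Fin n → Fin n → (M →ₗ[ℂ] M) := fun i j =>
    { toFun := fun v => D (LinearMap.single A (fun _ : Fin n => M) i v) j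
      map_add' := fun v v' => by
        show D (LinearMap.single A (fun _ : Fin n => M) i (v + v')) j
            = D (LinearMap.single A (fun _ : Fin n => M) i v) j
              + D (LinearMap.single A (fun _ : Fin n => M) i v') j
        rw [map_add, map_add]
        rfl
      map_smul' := fun c v => by
        show D (LinearMap.single A (fun _ : Fin n => M) i (c • v)) j
            = c • D (LinearMap.single A (fun _ : Fin n => M) i v) j
        have h1 : (c • v : M) = (algebraMap ℂ A c) • v := (halg c v).symm
        rw [h1, map_smul, map_smul]
        rw [show ((algebraMap ℂ A c • D (LinearMap.single A (fun _ : Fin n => M) i v)) j)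
            = (algebraMap ℂ A c) • (D (LinearMap.single A (fun _ : Fin n => M) i v) j) from rfl]
        rw [halg] }
  have hg : ∀ i j, ∃ c : ℂ, g i j = c • LinearMap.id := by
    intro i j
    apply hend
    intro a
    ext v
    show D (LinearMap.single A (fun _ : Fin n => M) i (ρ a v)) j
        = ρ a (D (LinearMap.single A (fun _ : Fin n => M) i v) j)
    have h1 : ρ a v = a • v := rfl
    rw [h1, map_smul, map_smul]
    rw [show ((a • D (LinearMap.single A (fun _ : Fin n => M) i v)) j)
        = a • (D (LinearMap.single A (fun _ : Fin n => M) i v) j) from rfl]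
    rw [hsmul]
  choose cm hcm using hg
  have hsingle : ∀ y : Fin n → M, ∑ i, LinearMap.single A (fun _ : Fin n => M) i (y i) = y := by
    intro y
    ext j
    simp [LinearMap.single_apply]
  have hc0 : ∀ i j, cm i j = 0 := by
    intro i j
    have h1 : ∑ i, g i j (b i) = 0 := by
      have hh : D (∑ i, LinearMap.single A (fun _ : Fin n => M) i (x i)) = 0 := by
        rw [hsingle]; exact hDx
      rw [map_sum] at hh
      have h3 := congrFun hh j
      rw [show ((∑ i, D (LinearMap.single A (fun _ : Fin n => M) i (x i))) j)
          = ∑ i, D (LinearMap.single A (fun _ : Fin n => M) i (x i)) j from by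
        simp [Finset.sum_apply]] at h3
      exact h3
    have h2 : ∑ i, cm i j • b i = 0 := by
      rw [← h1]
      congr 1
      ext i
      rw [hcm i j]
      simp
    exact Fintype.linearIndependent_iff.mp b.linearIndependent _ h2 i
  have hD0 : ∀ y, D y = 0 := by
    intro y
    rw [← hsingle y, map_sum]
    apply Finset.sum_eq_zero
    intro i _
    ext j
    have := congrArg (fun f : M →ₗ[ℂ] M => f (y i)) (hcm i j)
    simp only [hc0, zero_smul, LinearMap.zero_apply] at this
    simpa [g] using this
  have hNtop : ∀ y : Fin n → M, y ∈ N := by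
    intro y
    have : e y = y := by
      have := hD0 y
      simp only [D, LinearMap.sub_apply, LinearMap.id_apply, sub_eq_zero] at this
      exact this.symm
    rw [← this]
    exact (π y).2
  intro E
  obtain ⟨a, ha⟩ := Submodule.mem_span_singleton.mp (hNtop (fun i => E (b i)))
  refine ⟨a, b.ext fun i => ?_⟩
  have := congrFun ha i
  simp only [Pi.smul_apply] at this
  rw [hsmul] at this
  exact this

end Burnside


section SuperRepLemmas

variable {A M : Type} [Ring A] [Algebra ℂ A] [AddCommGroup M] [Module ℂ M]
variable (σ : A ≃ₐ[ℂ] A) (ρ : A →ₐ[ℂ] Module.End ℂ M) (J : M →ₗ[ℂ] M)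

theorem Jρ_comm (hσ : ∀ a, σ (σ a) = a) (hsr : IsSuperRep σ ρ J) (a : A) (m : M) :
    ρ a (J m) = J (ρ (σ a) m) := by
  rw [hsr.2 (σ a) m, hσ a]

theorem typeM_ungraded_simple (hσ : ∀ a, σ (σ a) = a) (hsr : IsSuperRep σ ρ J)
    (hs : IsSimpleRep ρ J) (hTM : TypeMRep σ ρ J) :
    ∀ p : Submodule ℂ M, (∀ a, ∀ m ∈ p, ρ a m ∈ p) → p = ⊥ ∨ p = ⊤ := by
  intro p hp
  set Jp : Submodule ℂ M := p.map J with hJp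
  have hmemJp : ∀ m : M, m ∈ Jp ↔ ∃ y ∈ p, J y = m := fun m => Submodule.mem_map
  have hJJp : ∀ m ∈ Jp, J m ∈ p := by
    intro m hm
    obtain ⟨y, hy, rfl⟩ := (hmemJp m).mp hm
    rw [hsr.1]
    exact hy
  have hJpJ : ∀ m ∈ p, J m ∈ Jp := fun m hm => Submodule.mem_map_of_mem hm
  have hJpA : ∀ a, ∀ m ∈ Jp, ρ a m ∈ Jp := by
    intro a m hm
    obtain ⟨y, hy, rfl⟩ := (hmemJp m).mp hm
    rw [Jρ_comm σ ρ J hσ hsr]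
    exact hJpJ _ (hp _ _ hy)
  -- the intersection and the sum are graded submodules
  have hinf := hs.2 (p ⊓ Jp)
    (fun m hm => ⟨hJJp m hm.2, hJpJ m hm.1⟩)
    (fun a m hm => ⟨hp a m hm.1, hJpA a m hm.2⟩)
  have hsup := hs.2 (p ⊔ Jp)
    (fun m hm => by
      obtain ⟨x, hx, y, hy, rfl⟩ := Submodule.mem_sup.mp hm
      rw [map_add, add_comm]
      exact Submodule.add_mem_sup (hJJp y hy) (hJpJ x hx))
    (fun a m hm => by
      obtain ⟨x, hx, y, hy, rfl⟩ := Submodule.mem_sup.mp hm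
      rw [map_add]
      exact Submodule.add_mem_sup (hp a x hx) (hJpA a y hy))
  rcases hinf with hinf | hinf
  · rcases hsup with hsup | hsup
    · left
      rw [← le_bot_iff, ← hsup]
      exact le_sup_left
    · -- p and Jp are complementary
      have hcompl : IsCompl p Jp := ⟨disjoint_iff.mpr hinf, codisjoint_iff.mpr hsup⟩
      set π : M →ₗ[ℂ] M := p.subtype ∘ₗ p.projectionOnto Jp hcompl with hπ
      have hπp : ∀ m ∈ p, π m = m := fun m hm => by
        simp [hπ, Submodule.projectionOnto_apply_of_mem_left hcompl hm]
      have hπJp : ∀ m ∈ Jp, π m = 0 := fun m hm => by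
        simp [hπ, Submodule.projectionOnto_apply_of_mem_right hcompl hm]
      set f : M →ₗ[ℂ] M := J ∘ₗ ((2 : ℂ) • π - LinearMap.id) with hf
      have hdecomp : ∀ m : M, ∃ x ∈ p, ∃ y ∈ p, m = x + J y := by
        intro m
        have : m ∈ p ⊔ Jp := hsup.symm ▸ Submodule.mem_top
        obtain ⟨x, hx, z, hz, rfl⟩ := Submodule.mem_sup.mp this
        obtain ⟨y, hy, rfl⟩ := (hmemJp z).mp hz
        exact ⟨x, hx, y, hy, rfl⟩
      have hfval : ∀ x ∈ p, ∀ y ∈ p, f (x + J y) = J x - y := by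
        intro x hx y hy
        have : π (x + J y) = x := by
          rw [map_add, hπp x hx, hπJp _ (hJpJ y hy), add_zero]
        simp only [hf, LinearMap.comp_apply, LinearMap.sub_apply, LinearMap.smul_apply,
          LinearMap.id_apply, this]
        rw [two_smul]
        rw [show x + x - (x + J y) = x - J y by abel]
        rw [map_sub, hsr.1]
      have hodd : IsOddHom σ ρ J ρ J f := by
        constructor
        · intro m
          obtain ⟨x, hx, y, hy, rfl⟩ := hdecomp m
          have h1 : J (x + J y) = y + J x := by rw [map_add, hsr.1, add_comm]
          rw [h1, hfval y hy x hx, hfval x hx y hy]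
          rw [map_sub, hsr.1]
          abel
        · intro a m
          obtain ⟨x, hx, y, hy, rfl⟩ := hdecomp m
          have h1 : ρ a (x + J y) = ρ a x + J (ρ (σ a) y) := by
            rw [map_add, Jρ_comm σ ρ J hσ hsr]
          rw [h1, hfval _ (hp a x hx) _ (hp (σ a) y hy), hfval x hx y hy]
          rw [map_sub, hsr.2]
      have hf0 := hTM.2 f hodd
      left
      rw [eq_bot_iff]
      intro x hx
      have h1 : f x = J x := by
        have := hfval x hx 0 p.zero_mem
        simpa using this
      rw [hf0] at h1
      have h2 : J x = 0 := h1.symm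
      have := congrArg J h2
      rw [hsr.1] at this
      simpa using this
  · right
    rw [eq_top_iff, ← hinf]
    exact inf_le_left

theorem typeM_comm_scalar (hσ : ∀ a, σ (σ a) = a) (hsr : IsSuperRep σ ρ J)
    (hTM : TypeMRep σ ρ J) :
    ∀ f : Module.End ℂ M, (∀ a, f ∘ₗ ρ a = ρ a ∘ₗ f) → ∃ c : ℂ, f = c • LinearMap.id := by
  intro f hcomm
  have hcomm' : ∀ a m, f (ρ a m) = ρ a (f m) := fun a m =>
    congrArg (fun g : M →ₗ[ℂ] M => g m) (hcomm a)
  set fe : M →ₗ[ℂ] M := (2⁻¹ : ℂ) • (f + J ∘ₗ f ∘ₗ J) with hfe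
  set fo : M →ₗ[ℂ] M := (2⁻¹ : ℂ) • (f - J ∘ₗ f ∘ₗ J) with hfo
  have hstep : ∀ a m, J (f (J (ρ a m))) = ρ a (J (f (J m))) := by
    intro a m
    rw [hsr.2 a m, hcomm', hsr.2, hσ]
  have hfo_comm : ∀ a m, fo (ρ a m) = ρ a (fo m) := by
    intro a m
    simp only [hfo, LinearMap.smul_apply, LinearMap.sub_apply, LinearMap.comp_apply]
    rw [hcomm', hstep, ← map_sub, ← map_smul]
  have heven : IsEvenHom ρ J ρ J fe := by
    constructor
    · intro m
      simp only [hfe, LinearMap.smul_apply, LinearMap.add_apply, LinearMap.comp_apply, hsr.1,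
        map_smul, map_add]
      rw [add_comm]
    · intro a m
      simp only [hfe, LinearMap.smul_apply, LinearMap.add_apply, LinearMap.comp_apply]
      rw [hcomm', hstep, ← map_add, ← map_smul]
  have hodd : IsOddHom σ ρ J ρ J (fo ∘ₗ J) := by
    constructor
    · intro m
      simp only [LinearMap.comp_apply, hsr.1]
      simp only [hfo, LinearMap.smul_apply, LinearMap.sub_apply, LinearMap.comp_apply, hsr.1]
      rw [map_smul, map_sub, hsr.1]
      rw [smul_sub, smul_sub, neg_sub]
    · intro a m
      simp only [LinearMap.comp_apply]
      rw [hsr.2 a m, hfo_comm]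
  have hgo := hTM.2 _ hodd
  have hfo0 : ∀ m, fo m = 0 := by
    intro m
    have h1 : fo (J (J m)) = 0 := congrArg (fun g : M →ₗ[ℂ] M => g (J m)) hgo
    rwa [hsr.1] at h1
  obtain ⟨c, hc⟩ := hTM.1 fe heven
  refine ⟨c, ?_⟩
  ext m
  have h2 : f m = fe m + fo m := by
    simp only [hfe, hfo, LinearMap.smul_apply, LinearMap.add_apply, LinearMap.sub_apply,
      LinearMap.comp_apply]
    rw [← smul_add]
    rw [show f m + J (f (J m)) + (f m - J (f (J m))) = (2 : ℂ) • f m by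
      rw [two_smul]; abel]
    rw [smul_smul]
    norm_num
  rw [h2, hfo0, add_zero, hc]

theorem typeM_surj [FiniteDimensional ℂ M] (hσ : ∀ a, σ (σ a) = a) (hsr : IsSuperRep σ ρ J)
    (hs : IsSimpleRep ρ J) (hTM : TypeMRep σ ρ J) : Function.Surjective ρ :=
  burnside ρ hs.1 (typeM_ungraded_simple σ ρ J hσ hsr hs hTM) (typeM_comm_scalar σ ρ J hσ hsr hTM)

/-- Decomposition of an arbitrary endomorphism into the image of an even element plus
the image of an odd element composed with `J`, given surjectivity of `ρ`. -/
theorem graded_decomp (hσ : ∀ a, σ (σ a) = a) (hsr : IsSuperRep σ ρ J)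
    (hsurj : Function.Surjective ρ) (E : Module.End ℂ M) :
    ∃ c d : A, σ c = c ∧ σ d = -d ∧ E = ρ c + ρ d ∘ₗ J := by
  obtain ⟨c₀, hc₀⟩ := hsurj E
  obtain ⟨d₀, hd₀⟩ := hsurj (E ∘ₗ J)
  refine ⟨(2⁻¹ : ℂ) • (c₀ + σ c₀), (2⁻¹ : ℂ) • (d₀ - σ d₀), ?_, ?_, ?_⟩
  · rw [map_smul, map_add, hσ, add_comm]
  · rw [map_smul, map_sub, hσ, ← smul_neg, neg_sub]
  · have hρσ : ∀ x : A, ∀ m, ρ (σ x) m = J (ρ x (J m)) := by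
      intro x m
      rw [hsr.2, hsr.1]
    ext m
    simp only [LinearMap.add_apply, LinearMap.comp_apply, map_smul, LinearMap.smul_apply,
      map_add, map_sub, LinearMap.sub_apply]
    rw [hρσ c₀ m, hρσ d₀ (J m), hc₀, hd₀]
    simp only [LinearMap.comp_apply]
    rw [hsr.1]
    rw [← smul_add]
    rw [show E m + J (E (J m)) + (E m - J (E (J m))) = (2 : ℂ) • E m by rw [two_smul]; abel]
    rw [smul_smul]
    norm_num

end SuperRepLemmas


end Stmt8Aux

/-- if `U`, `W` are simple graded modules over superalgebras `A`, `B`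
and at least one is of type `M`, then `U ⊗ W` is a simple module over the graded
tensor product `A ⊗̇ B`; it is of type `M` if both are of type `M`, and of type `Q`
if exactly one of them is of type `Q`. -/
theorem stmt8
    (A B C : Type) [Ring A] [Algebra ℂ A] [Ring B] [Algebra ℂ B] [Ring C] [Algebra ℂ C]
    [FiniteDimensional ℂ A] [FiniteDimensional ℂ B]
    (σA : A ≃ₐ[ℂ] A) (σB : B ≃ₐ[ℂ] B) (σC : C ≃ₐ[ℂ] C)
    (iA : A →ₐ[ℂ] C) (iB : B →ₐ[ℂ] C) (hgt : IsGradedTensor σA σB σC iA iB)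
    (U : SRep A σA) (W : SRep B σB)
    [FiniteDimensional ℂ U.M] [FiniteDimensional ℂ W.M]
    (hU : IsSimpleRep U.ρ U.J) (hW : IsSimpleRep W.ρ W.J)
    (hM : TypeMRep σA U.ρ U.J ∨ TypeMRep σB W.ρ W.J)
    (ρT : C →ₐ[ℂ] Module.End ℂ (U.M ⊗[ℂ] W.M))
    (hTA : ∀ (a : A) (u : U.M) (w : W.M), ρT (iA a) (u ⊗ₜ w) = (U.ρ a u) ⊗ₜ w)
    (hTB : ∀ (b : B) (u : U.M) (w : W.M),
      ρT (iB b) (u ⊗ₜ w) =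
        (2⁻¹ : ℂ) • (u ⊗ₜ (W.ρ (b + σB b) w)) +
          (2⁻¹ : ℂ) • ((U.J u) ⊗ₜ (W.ρ (b - σB b) w)))
    (hTJ : ∀ (c : C) (m : U.M ⊗[ℂ] W.M),
      TensorProduct.map U.J W.J (ρT c m) = ρT (σC c) (TensorProduct.map U.J W.J m)) :
    IsSimpleRep ρT (TensorProduct.map U.J W.J) ∧
    (TypeMRep σA U.ρ U.J → TypeMRep σB W.ρ W.J →
      TypeMRep σC ρT (TensorProduct.map U.J W.J)) ∧
    ((TypeMRep σA U.ρ U.J ∧ TypeQRep σB W.ρ W.J) ∨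
        (TypeQRep σA U.ρ U.J ∧ TypeMRep σB W.ρ W.J) →
      TypeQRep σC ρT (TensorProduct.map U.J W.J)) := by
  classical
  obtain ⟨hσA, hσB, hσC, hiA, hiB, -, hmu⟩ := hgt
  obtain ⟨u₀, hu₀⟩ := hU.1
  obtain ⟨w₀, hw₀⟩ := hW.1
  have hsrU : IsSuperRep σA U.ρ U.J := ⟨U.hJ, U.hJρ⟩
  have hsrW : IsSuperRep σB W.ρ W.J := ⟨W.hJ, W.hJρ⟩
  have hJU2 : U.J ∘ₗ U.J = LinearMap.id := by ext u; exact U.hJ u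
  have hJW2 : W.J ∘ₗ W.J = LinearMap.id := by ext w; exact W.hJ w
  -- the grading involution of the tensor product
  set JT : U.M ⊗[ℂ] W.M →ₗ[ℂ] U.M ⊗[ℂ] W.M := TensorProduct.map U.J W.J with hJT
  have hJT2 : JT ∘ₗ JT = LinearMap.id := by
    rw [hJT, ← TensorProduct.map_comp, hJU2, hJW2, TensorProduct.map_id]
  -- action of A
  have hρTA : ∀ a, ρT (iA a) = TensorProduct.map (U.ρ a) LinearMap.id := by
    intro a
    apply TensorProduct.ext'
    intro u w
    rw [hTA]
    simp
  -- action of even and odd elements of B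
  have hEB : ∀ b, σB b = b → ρT (iB b) = TensorProduct.map LinearMap.id (W.ρ b) := by
    intro b hb
    apply TensorProduct.ext'
    intro u w
    rw [hTB, hb]
    simp only [sub_self, map_zero, LinearMap.zero_apply, TensorProduct.tmul_zero, smul_zero,
      add_zero, TensorProduct.map_tmul, LinearMap.id_apply]
    rw [show b + b = (2 : ℂ) • b by rw [two_smul], map_smul]
    rw [LinearMap.smul_apply, TensorProduct.tmul_smul, smul_smul]
    norm_num
  have hOB : ∀ b, σB b = -b → ρT (iB b) = TensorProduct.map U.J (W.ρ b) := by
    intro b hb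
    apply TensorProduct.ext'
    intro u w
    rw [hTB, hb]
    simp only [add_neg_cancel, map_zero, LinearMap.zero_apply, TensorProduct.tmul_zero, smul_zero,
      zero_add, TensorProduct.map_tmul, sub_neg_eq_add]
    rw [show b + b = (2 : ℂ) • b by rw [two_smul], map_smul]
    rw [LinearMap.smul_apply, TensorProduct.tmul_smul, smul_smul]
    norm_num
  -- even/odd decomposition in B
  have hbe : ∀ b, σB ((2⁻¹ : ℂ) • (b + σB b)) = (2⁻¹ : ℂ) • (b + σB b) := by
    intro b
    rw [map_smul, map_add, hσB, add_comm]
  have hbo : ∀ b, σB ((2⁻¹ : ℂ) • (b - σB b)) = -((2⁻¹ : ℂ) • (b - σB b)) := by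
    intro b
    rw [map_smul, map_sub, hσB, ← smul_neg, neg_sub]
  have hbebo : ∀ b, (2⁻¹ : ℂ) • (b + σB b) + (2⁻¹ : ℂ) • (b - σB b) = b := by
    intro b
    rw [← smul_add]
    rw [show b + σB b + (b - σB b) = (2 : ℂ) • b by rw [two_smul]; abel]
    rw [smul_smul]
    norm_num
  -- derived facts depending on which factor is type M
  have hsurjU : TypeMRep σA U.ρ U.J → Function.Surjective U.ρ := fun hMU =>
    Stmt8Aux.typeM_surj σA U.ρ U.J hσA hsrU hU hMU
  have hsurjW : TypeMRep σB W.ρ W.J → Function.Surjective W.ρ := fun hMW =>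
    Stmt8Aux.typeM_surj σB W.ρ W.J hσB hsrW hW hMW
  -- if W is type M, then p is stable under all 1 ⊗ E whenever it is graded and stable
  have hstabW : TypeMRep σB W.ρ W.J → ∀ p : Submodule ℂ (U.M ⊗[ℂ] W.M),
      (∀ m ∈ p, JT m ∈ p) → (∀ c, ∀ m ∈ p, ρT c m ∈ p) →
      ∀ E : Module.End ℂ W.M, ∀ m ∈ p, TensorProduct.map LinearMap.id E m ∈ p := by
    intro hMW p hpJ hpρ E m hm
    obtain ⟨c, d, hc, hd, hE⟩ :=
      Stmt8Aux.graded_decomp σB W.ρ W.J hσB hsrW (hsurjW hMW) E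
    have h1 : TensorProduct.map (LinearMap.id (R := ℂ) (M := U.M)) E
        = ρT (iB c) + ρT (iB d) ∘ₗ JT := by
      rw [hE, hEB c hc, hOB d hd, hJT]
      rw [show W.ρ c + W.ρ d ∘ₗ W.J
          = W.ρ c + W.ρ d ∘ₗ W.J from rfl]
      have e1 : TensorProduct.map (LinearMap.id (R := ℂ) (M := U.M)) (W.ρ c + W.ρ d ∘ₗ W.J)
          = TensorProduct.map LinearMap.id (W.ρ c)
            + TensorProduct.map LinearMap.id (W.ρ d ∘ₗ W.J) := TensorProduct.map_add_right _ _ _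
      rw [e1]
      congr 1
      rw [← TensorProduct.map_comp, hJU2]
    rw [h1]
    exact p.add_mem (hpρ _ _ hm) (hpρ _ _ (hpJ _ hm))
  -- Part 1: simplicity
  have hsimpleT : IsSimpleRep ρT (TensorProduct.map U.J W.J) := by
    refine ⟨⟨u₀ ⊗ₜ w₀, Stmt8Aux.tmul_ne_zero hu₀ hw₀⟩, ?_⟩
    intro p hpJ hpρ
    by_cases hbot : p = ⊥
    · left; exact hbot
    right
    obtain ⟨t, htp, ht0⟩ := (Submodule.ne_bot_iff p).mp hbot
    rcases hM with hMU | hMW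
    · -- U is type M
      set bU := Module.finBasis ℂ U.M with hbU
      have hex : ∃ i, Stmt8Aux.lcoord bU i t ≠ 0 := by
        by_contra h
        push_neg at h
        apply ht0
        rw [← Stmt8Aux.sum_lcoord bU t]
        simp [h]
      obtain ⟨i₁, hi₁⟩ := hex
      have hcut : ∀ u : U.M, u ⊗ₜ[ℂ] (Stmt8Aux.lcoord bU i₁ t) ∈ p := by
        intro u
        obtain ⟨a, ha⟩ := hsurjU hMU ((bU.coord i₁).smulRight u)
        have h1 := hpρ (iA a) t htp
        rw [hρTA a, ha, Stmt8Aux.map_smulRight_lcoord] at h1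
        exact h1
      set q : Submodule ℂ W.M :=
        { carrier := {w | ∀ u : U.M, u ⊗ₜ[ℂ] w ∈ p}
          add_mem' := fun h1 h2 u => by
            rw [TensorProduct.tmul_add]; exact p.add_mem (h1 u) (h2 u)
          zero_mem' := fun u => by rw [TensorProduct.tmul_zero]; exact p.zero_mem
          smul_mem' := fun c w hw u => by
            rw [TensorProduct.tmul_smul]; exact p.smul_mem c (hw u) } with hq
      have hmemq : ∀ w : W.M, w ∈ q ↔ ∀ u : U.M, u ⊗ₜ[ℂ] w ∈ p := fun w => Iff.rfl
      have hqJ : ∀ w ∈ q, W.J w ∈ q := by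
        intro w hw u
        have := hpJ _ ((hmemq w).mp hw (U.J u))
        simp only [TensorProduct.map_tmul, U.hJ] at this
        exact this
      have hqB : ∀ b, ∀ w ∈ q, W.ρ b w ∈ q := by
        intro b w hw
        have he : ∀ b', σB b' = b' → W.ρ b' w ∈ q := by
          intro b' hb' u
          have := hpρ (iB b') _ ((hmemq w).mp hw u)
          rw [hEB b' hb'] at this
          simpa using this
        have ho : ∀ b', σB b' = -b' → W.ρ b' w ∈ q := by
          intro b' hb' u
          have := hpρ (iB b') _ ((hmemq w).mp hw (U.J u))
          rw [hOB b' hb'] at this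
          simp only [TensorProduct.map_tmul, U.hJ] at this
          exact this
        have hsum := q.add_mem (he _ (hbe b)) (ho _ (hbo b))
        have h2 : W.ρ ((2⁻¹ : ℂ) • (b + σB b)) w + W.ρ ((2⁻¹ : ℂ) • (b - σB b)) w
            = W.ρ b w := by
          rw [← LinearMap.add_apply, ← map_add, hbebo]
        rwa [h2] at hsum
      rcases hW.2 q hqJ hqB with hqbot | hqtop
      · exfalso
        apply hi₁
        have : Stmt8Aux.lcoord bU i₁ t ∈ q := hcut
        rw [hqbot] at this
        simpa using this
      · rw [eq_top_iff, ← TensorProduct.span_tmul_eq_top ℂ U.M W.M, Submodule.span_le]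
        rintro x ⟨u, w, rfl⟩
        have hwq : w ∈ q := hqtop ▸ Submodule.mem_top
        exact (hmemq w).mp hwq u
    · -- W is type M
      set bW := Module.finBasis ℂ W.M with hbW
      have hex : ∃ i, Stmt8Aux.rcoord bW i t ≠ 0 := by
        by_contra h
        push_neg at h
        apply ht0
        rw [← Stmt8Aux.sum_rcoord bW t]
        simp [h]
      obtain ⟨i₁, hi₁⟩ := hex
      have hcut : ∀ w : W.M, (Stmt8Aux.rcoord bW i₁ t) ⊗ₜ[ℂ] w ∈ p := by
        intro w
        have h1 := hstabW hMW p hpJ hpρ ((bW.coord i₁).smulRight w) t htp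
        rwa [Stmt8Aux.map_smulRight_rcoord] at h1
      set q : Submodule ℂ U.M :=
        { carrier := {u | ∀ w : W.M, u ⊗ₜ[ℂ] w ∈ p}
          add_mem' := fun h1 h2 w => by
            rw [TensorProduct.add_tmul]; exact p.add_mem (h1 w) (h2 w)
          zero_mem' := fun w => by rw [TensorProduct.zero_tmul]; exact p.zero_mem
          smul_mem' := fun c u hu w => by
            rw [TensorProduct.smul_tmul, TensorProduct.tmul_smul]
            exact p.smul_mem c (hu w) } with hq
      have hmemq : ∀ u : U.M, u ∈ q ↔ ∀ w : W.M, u ⊗ₜ[ℂ] w ∈ p := fun u => Iff.rfl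
      have hqJ : ∀ u ∈ q, U.J u ∈ q := by
        intro u hu w
        have := hpJ _ ((hmemq u).mp hu (W.J w))
        simp only [TensorProduct.map_tmul, W.hJ] at this
        exact this
      have hqA : ∀ a, ∀ u ∈ q, U.ρ a u ∈ q := by
        intro a u hu w
        have := hpρ (iA a) _ ((hmemq u).mp hu w)
        rw [hρTA a] at this
        simpa using this
      rcases hU.2 q hqJ hqA with hqbot | hqtop
      · exfalso
        apply hi₁
        have : Stmt8Aux.rcoord bW i₁ t ∈ q := hcut
        rw [hqbot] at this
        simpa using this
      · rw [eq_top_iff, ← TensorProduct.span_tmul_eq_top ℂ U.M W.M, Submodule.span_le]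
        rintro x ⟨u, w, rfl⟩
        have huq : u ∈ q := hqtop ▸ Submodule.mem_top
        exact (hmemq u).mp huq w
  -- operator-level identities
  have hJρA : ∀ a, U.J ∘ₗ U.ρ (σA a) = U.ρ a ∘ₗ U.J := by
    intro a
    refine LinearMap.ext fun u => ?_
    simp only [LinearMap.comp_apply]
    rw [U.hJρ, hσA]
  have hmapE : TypeMRep σB W.ρ W.J → ∀ E : Module.End ℂ W.M, ∃ c d : B,
      σB c = c ∧ σB d = -d ∧
      TensorProduct.map LinearMap.id E = ρT (iB c) + ρT (iB d) ∘ₗ JT := by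
    intro hMW E
    obtain ⟨c, d, hc, hd, hE⟩ := Stmt8Aux.graded_decomp σB W.ρ W.J hσB hsrW (hsurjW hMW) E
    refine ⟨c, d, hc, hd, ?_⟩
    rw [hE, hEB c hc, hOB d hd, hJT]
    rw [TensorProduct.map_add_right]
    congr 1
    rw [← TensorProduct.map_comp, hJU2]
  have combineB : ∀ F : U.M ⊗[ℂ] W.M →ₗ[ℂ] U.M ⊗[ℂ] W.M,
      (∀ b, σB b = b → F ∘ₗ ρT (iB b) = ρT (iB (σB b)) ∘ₗ F) →
      (∀ b, σB b = -b → F ∘ₗ ρT (iB b) = ρT (iB (σB b)) ∘ₗ F) →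
      ∀ b, F ∘ₗ ρT (iB b) = ρT (iB (σB b)) ∘ₗ F := by
    intro F he ho b
    have h1 := he _ (hbe b)
    have h2 := ho _ (hbo b)
    have e1 : ρT (iB b)
        = ρT (iB ((2⁻¹ : ℂ) • (b + σB b))) + ρT (iB ((2⁻¹ : ℂ) • (b - σB b))) := by
      rw [← map_add, ← map_add, hbebo]
    have e2 : ρT (iB (σB b))
        = ρT (iB (σB ((2⁻¹ : ℂ) • (b + σB b)))) + ρT (iB (σB ((2⁻¹ : ℂ) • (b - σB b)))) := by
      rw [← map_add, ← map_add, ← map_add, hbebo]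
    rw [e1, e2, LinearMap.comp_add, LinearMap.add_comp, h1, h2]
  have mk_odd : ∀ F : U.M ⊗[ℂ] W.M →ₗ[ℂ] U.M ⊗[ℂ] W.M,
      (∀ m, F (JT m) = -(JT (F m))) →
      (∀ a, F ∘ₗ ρT (iA a) = ρT (iA (σA a)) ∘ₗ F) →
      (∀ b, F ∘ₗ ρT (iB b) = ρT (iB (σB b)) ∘ₗ F) →
      IsOddHom σC ρT JT ρT JT F := by
    intro F hFJ hA hB
    refine ⟨hFJ, ?_⟩
    have key : ∀ x : TensorProduct ℂ A B,
        F ∘ₗ ρT (muMap iA iB x) = ρT (σC (muMap iA iB x)) ∘ₗ F := by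
      intro x
      induction x using TensorProduct.induction_on with
      | zero => simp
      | tmul a b =>
        have hx : muMap iA iB (a ⊗ₜ b) = iA a * iB b := by
          simp [muMap]
        rw [hx, map_mul ρT, map_mul σC, hiA, hiB, map_mul ρT]
        rw [show ρT (iA a) * ρT (iB b) = ρT (iA a) ∘ₗ ρT (iB b) from rfl,
          show ρT (iA (σA a)) * ρT (iB (σB b)) = ρT (iA (σA a)) ∘ₗ ρT (iB (σB b)) from rfl]
        rw [← LinearMap.comp_assoc, hA, LinearMap.comp_assoc, hB, ← LinearMap.comp_assoc]
      | add x y hx hy =>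
        rw [map_add, map_add, map_add, map_add, LinearMap.comp_add, LinearMap.add_comp,
          hx, hy]
    intro c m
    obtain ⟨x, rfl⟩ := hmu.2 c
    exact LinearMap.congr_fun (key x) m
  -- reductions of endomorphisms of the tensor product when U is of type M
  have evenRedL : TypeMRep σA U.ρ U.J →
      ∀ f : U.M ⊗[ℂ] W.M →ₗ[ℂ] U.M ⊗[ℂ] W.M, IsEvenHom ρT JT ρT JT f →
      ∃ g : W.M →ₗ[ℂ] W.M, IsEvenHom W.ρ W.J W.ρ W.J g
        ∧ f = TensorProduct.map LinearMap.id g := by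
    intro hMU f hf
    have hcommA : ∀ E : Module.End ℂ U.M,
        f ∘ₗ TensorProduct.map E LinearMap.id = TensorProduct.map E LinearMap.id ∘ₗ f := by
      intro E
      obtain ⟨a, rfl⟩ := hsurjU hMU E
      rw [← hρTA a]
      exact LinearMap.ext fun m => hf.2 (iA a) m
    obtain ⟨g, hg⟩ := Stmt8Aux.flip_left ⟨u₀, hu₀⟩ f hcommA
    have hgJ : g ∘ₗ W.J = W.J ∘ₗ g := by
      have h0 : f ∘ₗ JT = JT ∘ₗ f := LinearMap.ext fun m => hf.1 m
      rw [hg, hJT] at h0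
      rw [← TensorProduct.map_comp, ← TensorProduct.map_comp, LinearMap.comp_id,
        LinearMap.id_comp] at h0
      exact Stmt8Aux.mapJ_cancel_left ⟨u₀, hu₀⟩ hJU2 h0
    have hgρe : ∀ b, σB b = b → g ∘ₗ W.ρ b = W.ρ b ∘ₗ g := by
      intro b hb
      have h0 : f ∘ₗ ρT (iB b) = ρT (iB b) ∘ₗ f := LinearMap.ext fun m => hf.2 (iB b) m
      rw [hg, hEB b hb, Stmt8Aux.comp_map_right, Stmt8Aux.comp_map_right] at h0
      exact Stmt8Aux.map_id_left_cancel ⟨u₀, hu₀⟩ h0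
    have hgρo : ∀ b, σB b = -b → g ∘ₗ W.ρ b = W.ρ b ∘ₗ g := by
      intro b hb
      have h0 : f ∘ₗ ρT (iB b) = ρT (iB b) ∘ₗ f := LinearMap.ext fun m => hf.2 (iB b) m
      rw [hg, hOB b hb] at h0
      rw [← TensorProduct.map_comp, ← TensorProduct.map_comp, LinearMap.comp_id,
        LinearMap.id_comp] at h0
      exact Stmt8Aux.mapJ_cancel_left ⟨u₀, hu₀⟩ hJU2 h0
    refine ⟨g, ⟨fun w => LinearMap.congr_fun hgJ w, fun b w => ?_⟩, hg⟩
    have h1 := LinearMap.congr_fun (hgρe _ (hbe b)) w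
    have h2 := LinearMap.congr_fun (hgρo _ (hbo b)) w
    simp only [LinearMap.comp_apply] at h1 h2
    have e1 : W.ρ b w = W.ρ ((2⁻¹ : ℂ) • (b + σB b)) w + W.ρ ((2⁻¹ : ℂ) • (b - σB b)) w := by
      rw [← LinearMap.add_apply, ← map_add, hbebo]
    rw [e1, map_add, h1, h2, ← LinearMap.add_apply, ← map_add, hbebo]
  have oddRedL : TypeMRep σA U.ρ U.J →
      ∀ f : U.M ⊗[ℂ] W.M →ₗ[ℂ] U.M ⊗[ℂ] W.M, IsOddHom σC ρT JT ρT JT f →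
      ∃ g : W.M →ₗ[ℂ] W.M, IsOddHom σB W.ρ W.J W.ρ W.J g ∧ f = TensorProduct.map U.J g := by
    intro hMU f hf
    have hrelA' : ∀ a, f ∘ₗ TensorProduct.map (U.ρ a) LinearMap.id
        = TensorProduct.map (U.ρ (σA a)) LinearMap.id ∘ₗ f := by
      intro a
      rw [← hρTA, ← hρTA]
      refine LinearMap.ext fun m => ?_
      simp only [LinearMap.comp_apply]
      rw [hf.2 (iA a) m, hiA]
    have hcommA : ∀ E : Module.End ℂ U.M,
        (TensorProduct.map U.J LinearMap.id ∘ₗ f) ∘ₗ TensorProduct.map E LinearMap.id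
          = TensorProduct.map E LinearMap.id ∘ₗ (TensorProduct.map U.J LinearMap.id ∘ₗ f) := by
      intro E
      obtain ⟨a, rfl⟩ := hsurjU hMU E
      rw [LinearMap.comp_assoc, hrelA' a, ← LinearMap.comp_assoc, Stmt8Aux.comp_map_left,
        hJρA a, ← Stmt8Aux.comp_map_left, LinearMap.comp_assoc]
    obtain ⟨g, hg⟩ := Stmt8Aux.flip_left ⟨u₀, hu₀⟩ _ hcommA
    have hfg : f = TensorProduct.map U.J g := by
      have hid : TensorProduct.map U.J LinearMap.id
          ∘ₗ (TensorProduct.map U.J LinearMap.id ∘ₗ f) = f := by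
        rw [← LinearMap.comp_assoc, Stmt8Aux.comp_map_left, hJU2, TensorProduct.map_id,
          LinearMap.id_comp]
      rw [← hid, hg, Stmt8Aux.comp_map_mixed₁]
    have hgJ : g ∘ₗ W.J = -(W.J ∘ₗ g) := by
      have h0 : f ∘ₗ JT = -(JT ∘ₗ f) := by
        refine LinearMap.ext fun m => ?_
        simp only [LinearMap.comp_apply, LinearMap.neg_apply]
        exact hf.1 m
      rw [hfg, hJT] at h0
      rw [← TensorProduct.map_comp, ← TensorProduct.map_comp, hJU2,
        ← Stmt8Aux.map_neg_right] at h0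
      exact Stmt8Aux.map_id_left_cancel ⟨u₀, hu₀⟩ h0
    have hgρe : ∀ b, σB b = b → g ∘ₗ W.ρ b = W.ρ b ∘ₗ g := by
      intro b hb
      have h0 : f ∘ₗ ρT (iB b) = ρT (iB b) ∘ₗ f := by
        refine LinearMap.ext fun m => ?_
        simp only [LinearMap.comp_apply]
        rw [hf.2 (iB b) m, hiB, hb]
      rw [hfg, hEB b hb] at h0
      rw [← TensorProduct.map_comp, ← TensorProduct.map_comp, LinearMap.comp_id,
        LinearMap.id_comp] at h0
      exact Stmt8Aux.mapJ_cancel_left ⟨u₀, hu₀⟩ hJU2 h0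
    have hgρo : ∀ b, σB b = -b → g ∘ₗ W.ρ b = -(W.ρ b ∘ₗ g) := by
      intro b hb
      have h0 : f ∘ₗ ρT (iB b) = -(ρT (iB b) ∘ₗ f) := by
        refine LinearMap.ext fun m => ?_
        simp only [LinearMap.comp_apply, LinearMap.neg_apply]
        rw [hf.2 (iB b) m, hiB, hb, map_neg, map_neg, LinearMap.neg_apply]
      rw [hfg, hOB b hb] at h0
      rw [← TensorProduct.map_comp, ← TensorProduct.map_comp, hJU2,
        ← Stmt8Aux.map_neg_right] at h0
      exact Stmt8Aux.map_id_left_cancel ⟨u₀, hu₀⟩ h0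
    refine ⟨g, ⟨fun w => ?_, fun b w => ?_⟩, hfg⟩
    · have := LinearMap.congr_fun hgJ w
      simpa using this
    · have h1 := LinearMap.congr_fun (hgρe _ (hbe b)) w
      have h2 := LinearMap.congr_fun (hgρo _ (hbo b)) w
      simp only [LinearMap.comp_apply, LinearMap.neg_apply] at h1 h2
      have e1 : W.ρ b w = W.ρ ((2⁻¹ : ℂ) • (b + σB b)) w + W.ρ ((2⁻¹ : ℂ) • (b - σB b)) w := by
        rw [← LinearMap.add_apply, ← map_add, hbebo]
      rw [e1, map_add, h1, h2]
      have e3 : W.ρ (σB b) (g w)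
          = W.ρ ((2⁻¹ : ℂ) • (b + σB b)) (g w) - W.ρ ((2⁻¹ : ℂ) • (b - σB b)) (g w) := by
        rw [← LinearMap.sub_apply, ← map_sub]
        congr 2
        rw [← smul_sub]
        rw [show b + σB b - (b - σB b) = (2 : ℂ) • σB b by rw [two_smul]; abel]
        rw [smul_smul]
        norm_num
      rw [e3]
      abel
  -- reductions of endomorphisms of the tensor product when W is of type M
  have evenRedR : TypeMRep σB W.ρ W.J →
      ∀ f : U.M ⊗[ℂ] W.M →ₗ[ℂ] U.M ⊗[ℂ] W.M, IsEvenHom ρT JT ρT JT f →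
      ∃ g : U.M →ₗ[ℂ] U.M, IsEvenHom U.ρ U.J U.ρ U.J g
        ∧ f = TensorProduct.map g LinearMap.id := by
    intro hMW f hf
    have hfJop : f ∘ₗ JT = JT ∘ₗ f := LinearMap.ext fun m => hf.1 m
    have hcommB : ∀ E : Module.End ℂ W.M,
        f ∘ₗ TensorProduct.map LinearMap.id E = TensorProduct.map LinearMap.id E ∘ₗ f := by
      intro E
      obtain ⟨c, d, hc, hd, hE⟩ := hmapE hMW E
      have hcop : f ∘ₗ ρT (iB c) = ρT (iB c) ∘ₗ f := LinearMap.ext fun m => hf.2 (iB c) m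
      have hdop : f ∘ₗ ρT (iB d) = ρT (iB d) ∘ₗ f := LinearMap.ext fun m => hf.2 (iB d) m
      rw [hE, LinearMap.comp_add, LinearMap.add_comp, hcop]
      congr 1
      rw [← LinearMap.comp_assoc, hdop, LinearMap.comp_assoc, hfJop, ← LinearMap.comp_assoc]
    obtain ⟨g, hg⟩ := Stmt8Aux.flip_right ⟨w₀, hw₀⟩ f hcommB
    have hgJ : g ∘ₗ U.J = U.J ∘ₗ g := by
      have h0 := hfJop
      rw [hg, hJT] at h0
      rw [← TensorProduct.map_comp, ← TensorProduct.map_comp, LinearMap.comp_id,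
        LinearMap.id_comp] at h0
      exact Stmt8Aux.mapJ_cancel_right ⟨w₀, hw₀⟩ hJW2 h0
    have hgρ : ∀ a, g ∘ₗ U.ρ a = U.ρ a ∘ₗ g := by
      intro a
      have h0 : f ∘ₗ ρT (iA a) = ρT (iA a) ∘ₗ f := LinearMap.ext fun m => hf.2 (iA a) m
      rw [hg, hρTA, Stmt8Aux.comp_map_left, Stmt8Aux.comp_map_left] at h0
      exact Stmt8Aux.map_id_right_cancel ⟨w₀, hw₀⟩ h0
    exact ⟨g, ⟨fun u => LinearMap.congr_fun hgJ u,
      fun a u => LinearMap.congr_fun (hgρ a) u⟩, hg⟩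
  have oddRedR : TypeMRep σB W.ρ W.J →
      ∀ f : U.M ⊗[ℂ] W.M →ₗ[ℂ] U.M ⊗[ℂ] W.M, IsOddHom σC ρT JT ρT JT f →
      ∃ g : U.M →ₗ[ℂ] U.M, IsOddHom σA U.ρ U.J U.ρ U.J g
        ∧ f = TensorProduct.map g LinearMap.id := by
    intro hMW f hf
    have hfJop : f ∘ₗ JT = -(JT ∘ₗ f) := by
      refine LinearMap.ext fun m => ?_
      simp only [LinearMap.comp_apply, LinearMap.neg_apply]
      exact hf.1 m
    have hcommB : ∀ E : Module.End ℂ W.M,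
        f ∘ₗ TensorProduct.map LinearMap.id E = TensorProduct.map LinearMap.id E ∘ₗ f := by
      intro E
      obtain ⟨c, d, hc, hd, hE⟩ := hmapE hMW E
      have hcop : f ∘ₗ ρT (iB c) = ρT (iB c) ∘ₗ f := by
        refine LinearMap.ext fun m => ?_
        simp only [LinearMap.comp_apply]
        rw [hf.2 (iB c) m, hiB, hc]
      have hdop : f ∘ₗ ρT (iB d) = -(ρT (iB d) ∘ₗ f) := by
        refine LinearMap.ext fun m => ?_
        simp only [LinearMap.comp_apply, LinearMap.neg_apply]
        rw [hf.2 (iB d) m, hiB, hd, map_neg, map_neg, LinearMap.neg_apply]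
      rw [hE, LinearMap.comp_add, LinearMap.add_comp, hcop]
      congr 1
      rw [← LinearMap.comp_assoc, hdop, LinearMap.neg_comp, LinearMap.comp_assoc, hfJop,
        LinearMap.comp_neg, neg_neg, ← LinearMap.comp_assoc]
    obtain ⟨g, hg⟩ := Stmt8Aux.flip_right ⟨w₀, hw₀⟩ f hcommB
    have hgJ : g ∘ₗ U.J = -(U.J ∘ₗ g) := by
      have h0 := hfJop
      rw [hg, hJT] at h0
      rw [← TensorProduct.map_comp, ← TensorProduct.map_comp, LinearMap.comp_id,
        LinearMap.id_comp, ← Stmt8Aux.map_neg_left] at h0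
      exact Stmt8Aux.mapJ_cancel_right ⟨w₀, hw₀⟩ hJW2 h0
    have hgρ : ∀ a, g ∘ₗ U.ρ a = U.ρ (σA a) ∘ₗ g := by
      intro a
      have h0 : f ∘ₗ ρT (iA a) = ρT (iA (σA a)) ∘ₗ f := by
        refine LinearMap.ext fun m => ?_
        simp only [LinearMap.comp_apply]
        rw [hf.2 (iA a) m, hiA]
      rw [hg, hρTA, hρTA, Stmt8Aux.comp_map_left, Stmt8Aux.comp_map_left] at h0
      exact Stmt8Aux.map_id_right_cancel ⟨w₀, hw₀⟩ h0
    refine ⟨g, ⟨fun u => ?_, fun a u => LinearMap.congr_fun (hgρ a) u⟩, hg⟩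
    have := LinearMap.congr_fun hgJ u
    simpa using this
  refine ⟨hsimpleT, ?_, ?_⟩
  · -- both factors of type M
    intro hMU hMW
    constructor
    · intro f hf
      obtain ⟨g, hge, hfg⟩ := evenRedL hMU f hf
      obtain ⟨c, hc⟩ := hMW.1 g hge
      exact ⟨c, by rw [hfg, hc, TensorProduct.map_smul_right, TensorProduct.map_id]⟩
    · intro f hf
      obtain ⟨g, hgo, hfg⟩ := oddRedL hMU f hf
      rw [hfg, hMW.2 g hgo, TensorProduct.map_zero_right]
  · rintro (⟨hMU, hQW⟩ | ⟨hQU, hMW⟩)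
    · -- U of type M, W of type Q
      obtain ⟨h, hho, hh2, hmax⟩ := hQW.2
      constructor
      · intro f hf
        obtain ⟨g, hge, hfg⟩ := evenRedL hMU f hf
        obtain ⟨c, hc⟩ := hQW.1 g hge
        exact ⟨c, by rw [hfg, hc, TensorProduct.map_smul_right, TensorProduct.map_id]⟩
      · refine ⟨TensorProduct.map U.J h, ?_, ?_, ?_⟩
        · apply mk_odd
          · intro m
            have e0 : TensorProduct.map U.J h ∘ₗ JT
                = -(JT ∘ₗ TensorProduct.map U.J h) := by
              rw [hJT, ← TensorProduct.map_comp, ← TensorProduct.map_comp, hJU2,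
                ← Stmt8Aux.map_neg_right]
              congr 1
              refine LinearMap.ext fun w => ?_
              simp only [LinearMap.comp_apply, LinearMap.neg_apply]
              exact hho.1 w
            have := LinearMap.congr_fun e0 m
            simpa using this
          · intro a
            rw [hρTA, hρTA, ← TensorProduct.map_comp, ← TensorProduct.map_comp,
              LinearMap.comp_id, LinearMap.id_comp]
            congr 1
            refine LinearMap.ext fun u => ?_
            simp only [LinearMap.comp_apply]
            exact U.hJρ a u
          · apply combineB
            · intro b hb
              rw [hb, hEB b hb, ← TensorProduct.map_comp, ← TensorProduct.map_comp,
                LinearMap.comp_id, LinearMap.id_comp]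
              congr 1
              refine LinearMap.ext fun w => ?_
              simp only [LinearMap.comp_apply]
              rw [hho.2 b w, hb]
            · intro b hb
              rw [hb, map_neg, map_neg, hOB b hb, LinearMap.neg_comp,
                ← TensorProduct.map_comp, ← TensorProduct.map_comp, hJU2,
                ← Stmt8Aux.map_neg_right]
              congr 1
              refine LinearMap.ext fun w => ?_
              simp only [LinearMap.comp_apply, LinearMap.neg_apply]
              rw [hho.2 b w, hb, map_neg, LinearMap.neg_apply]
        · rw [← TensorProduct.map_comp, hJU2, hh2, TensorProduct.map_id]
        · intro g' hg'
          obtain ⟨g, hgo, hfg⟩ := oddRedL hMU g' hg'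
          obtain ⟨c, hc⟩ := hmax g hgo
          exact ⟨c, by rw [hfg, hc, TensorProduct.map_smul_right]⟩
    · -- U of type Q, W of type M
      obtain ⟨h, hho, hh2, hmax⟩ := hQU.2
      constructor
      · intro f hf
        obtain ⟨g, hge, hfg⟩ := evenRedR hMW f hf
        obtain ⟨c, hc⟩ := hQU.1 g hge
        exact ⟨c, by rw [hfg, hc, TensorProduct.map_smul_left, TensorProduct.map_id]⟩
      · refine ⟨TensorProduct.map h LinearMap.id, ?_, ?_, ?_⟩
        · apply mk_odd
          · intro m
            have e0 : TensorProduct.map h LinearMap.id ∘ₗ JT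
                = -(JT ∘ₗ TensorProduct.map h LinearMap.id) := by
              rw [hJT, ← TensorProduct.map_comp, ← TensorProduct.map_comp,
                LinearMap.comp_id, LinearMap.id_comp, ← Stmt8Aux.map_neg_left]
              congr 1
              refine LinearMap.ext fun u => ?_
              simp only [LinearMap.comp_apply, LinearMap.neg_apply]
              exact hho.1 u
            have := LinearMap.congr_fun e0 m
            simpa using this
          · intro a
            rw [hρTA, hρTA, Stmt8Aux.comp_map_left, Stmt8Aux.comp_map_left]
            congr 1
            refine LinearMap.ext fun u => ?_
            simp only [LinearMap.comp_apply]
            exact hho.2 a u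
          · apply combineB
            · intro b hb
              rw [hb, hEB b hb, Stmt8Aux.comp_map_mixed₁, Stmt8Aux.comp_map_mixed₂]
            · intro b hb
              rw [hb, map_neg, map_neg, hOB b hb, LinearMap.neg_comp,
                ← TensorProduct.map_comp, ← TensorProduct.map_comp,
                LinearMap.comp_id, LinearMap.id_comp, ← Stmt8Aux.map_neg_left]
              congr 1
              refine LinearMap.ext fun u => ?_
              simp only [LinearMap.comp_apply, LinearMap.neg_apply]
              exact hho.1 u
        · rw [← TensorProduct.map_comp, hh2, LinearMap.id_comp, TensorProduct.map_id]
        · intro g' hg'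
          obtain ⟨g, hgo, hfg⟩ := oddRedR hMW g' hg'
          obtain ⟨c, hc⟩ := hmax g hgo
          exact ⟨c, by rw [hfg, hc, TensorProduct.map_smul_left]⟩
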